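/- arXiv:1010.1606 — 4 statements merged into one kernel-verified Lean document; each statement's English description precedes it below -/
import Mathlib

section
/- Let A ⊆ B be commutative rings of prime characteristic p such that A is a pure subring of B (i.e., A → B remains injective after tensoring with any A-module, or equivalently here, A is a direct summand of B as an A-module). If B is strongly F-regular, then A is strongly F-regular. -/
/-- `R` is F-finite: `R` is module-finite over itself via the Frobenius `a ↦ a ^ p`. -/
def FFinite (R : Type*) [CommRing R] (p : ℕ) [Fact p.Prime] [CharP R p] : Prop :=
  @Module.Finite R R _ _ (Module.compHom R (frobenius R p))

/-- `R` is strongly F-regular: for every `a` not in any minimal prime, there is `r > 0`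
such that the `R^(r)`-linear map `aF^r : R^(r) → R`, `x ↦ a x ^ (p ^ r)`, splits
`R^(r)`-linearly; a splitting is an additive map `Φ : R → R` satisfying
`Φ (s ^ (p ^ r) * y) = s * Φ y` (i.e. `R^(r)`-linearity) and `Φ (a * x ^ (p ^ r)) = x`. -/
def StronglyFRegular (R : Type*) [CommRing R] (p : ℕ) [Fact p.Prime] [CharP R p] : Prop :=
  ∀ a : R, (∀ P ∈ minimalPrimes R, a ∉ P) → ∃ r : ℕ, 0 < r ∧
    ∃ Φ : R →+ R, (∀ s y : R, Φ (s ^ p ^ r * y) = s * Φ y) ∧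
      ∀ x : R, Φ (a * x ^ p ^ r) = x

/-!
Strong F-regularity of `B` (applied to `1`) makes the Frobenius of `B` injective, so `B` and its
subring `A` are reduced, and an element `a ∈ A` outside the minimal primes is a nonzerodivisor.
The image `f a` may lie in minimal primes of `B`; adding some `z` with `f a * z = 0` moves it out
of all of them. A splitting `Φ` of `(f a + z) F^r` on `B` then gives the splitting `ρ ∘ Φ ∘ f` of
`a F^r` on `A`: the contribution of `z` is annihilated by `a`, hence vanishes.
-/

open Ideal

section

variable {R : Type*} [CommRing R]

theorem StronglyFRegular.isReduced {p : ℕ} [Fact p.Prime] [CharP R p]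
    (h : StronglyFRegular R p) : IsReduced R := by
  obtain ⟨r, hr, Φ, -, hΦ⟩ := h 1 fun P hP h1 => hP.isPrime.ne_top ((eq_top_iff_one P).mpr h1)
  refine (isReduced_iff_pow_one_lt _ (Nat.one_lt_pow hr.ne' (Fact.out : p.Prime).one_lt)).mpr
    fun x hx => ?_
  simpa [hx] using (hΦ x).symm

namespace IsReduced

variable [IsReduced R]

theorem eq_zero_of_forall_mem_minimalPrimes {x : R} (hx : ∀ P ∈ minimalPrimes R, x ∈ P) :
    x = 0 := by
  have hrad : x ∈ (⊥ : Ideal R).radical := by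
    rw [← sInf_minimalPrimes]
    exact Submodule.mem_sInf.mpr hx
  obtain ⟨n, hn⟩ := hrad
  exact IsReduced.eq_zero x ⟨n, hn⟩

theorem mem_nonZeroDivisors_of_forall_notMem_minimalPrimes {a : R}
    (ha : ∀ P ∈ minimalPrimes R, a ∉ P) : a ∈ nonZeroDivisors R :=
  mem_nonZeroDivisors_iff_right.mpr fun _ ht => eq_zero_of_forall_mem_minimalPrimes fun P hP =>
    (hP.isPrime.mem_or_mem (ht ▸ P.zero_mem)).resolve_right (ha P hP)

end IsReduced

theorem Finset.inf_id_le_iff_mem_of_subset_minimalPrimes {T : Finset (Ideal R)}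
    (hT : ∀ Q ∈ T, Q ∈ minimalPrimes R) {P : Ideal R} (hP : P ∈ minimalPrimes R) :
    T.inf id ≤ P ↔ P ∈ T := by
  refine ⟨fun hle => ?_, fun hPT => Finset.inf_le (f := id) hPT⟩
  obtain ⟨Q, hQT, hQP⟩ := hP.isPrime.inf_le'.mp hle
  rwa [le_antisymm (hP.2 ⟨(hT Q hQT).isPrime, bot_le⟩ hQP) hQP]

/-- The witness `z` lies in every minimal prime avoiding `c` and in none containing `c`; it exists
by prime avoidance. -/
theorem IsReduced.exists_mul_eq_zero_and_add_notMem_minimalPrimes [IsReduced R]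
    (hfin : (minimalPrimes R).Finite) (c : R) :
    ∃ z, c * z = 0 ∧ ∀ P ∈ minimalPrimes R, c + z ∉ P := by
  classical
  set T := hfin.toFinset.filter (c ∉ ·)
  set S := hfin.toFinset.filter (c ∈ ·)
  have hT : ∀ Q ∈ T, Q ∈ minimalPrimes R := fun Q hQ => by simp_all [T]
  have hS : ∀ Q ∈ S, Q ∈ minimalPrimes R := fun Q hQ => by simp_all [S]
  obtain ⟨z, hzT, hzS⟩ : ∃ z ∈ T.inf id, ∀ Q ∈ S, z ∉ Q := by
    by_contra! h
    obtain ⟨Q, hQS, hle⟩ := (subset_union_prime ⊥ ⊥ fun Q hQ _ _ => (hS Q hQ).isPrime).mp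
      fun x hx => let ⟨Q, hQS, hxQ⟩ := h x hx; Set.mem_biUnion hQS hxQ
    have hQT := (Finset.inf_id_le_iff_mem_of_subset_minimalPrimes hT (hS Q hQS)).mp hle
    exact (Finset.mem_filter.mp hQT).2 (Finset.mem_filter.mp hQS).2
  have hzQ : ∀ Q ∈ minimalPrimes R, c ∉ Q → z ∈ Q := fun Q hQ hcQ =>
    Finset.inf_le (f := id) (Finset.mem_filter.mpr ⟨hfin.mem_toFinset.mpr hQ, hcQ⟩) hzT
  refine ⟨z, eq_zero_of_forall_mem_minimalPrimes fun Q hQ => ?_, fun Q hQ hczQ => ?_⟩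
  · by_cases hcQ : c ∈ Q
    · exact Q.mul_mem_right z hcQ
    · exact Q.mul_mem_left c (hzQ Q hQ hcQ)
  · by_cases hcQ : c ∈ Q
    · exact hzS Q (Finset.mem_filter.mpr ⟨hfin.mem_toFinset.mpr hQ, hcQ⟩)
        (by simpa using Q.sub_mem hczQ hcQ)
    · exact hcQ (by simpa using Q.sub_mem hczQ (hzQ Q hQ hcQ))

end

theorem exists_frobenius_splitting_of_retract {A B : Type*} [CommRing A] [CommRing B]
    (f : A →+* B) (ρ : B →+ A) (hlin : ∀ (a : A) (b : B), ρ (f a * b) = a * ρ b)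
    (hretr : ∀ a : A, ρ (f a) = a) {q : ℕ} (hq : q ≠ 0) {a : A} (ha : a ∈ nonZeroDivisors A)
    {z : B} (hz : f a * z = 0) {Φ : B →+ B} (hΦlin : ∀ s y : B, Φ (s ^ q * y) = s * Φ y)
    (hΦ : ∀ x : B, Φ ((f a + z) * x ^ q) = x) :
    ∃ Ψ : A →+ A, (∀ s y : A, Ψ (s ^ q * y) = s * Ψ y) ∧ ∀ x : A, Ψ (a * x ^ q) = x := by
  have hkill : ∀ w : B, ρ (Φ (z * w)) = 0 := by
    intro w
    refine (mem_nonZeroDivisors_iff.mp ha).1 _ ?_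
    obtain ⟨k, rfl⟩ := Nat.exists_eq_succ_of_ne_zero hq
    rw [← hlin, ← hΦlin, pow_succ, mul_assoc, ← mul_assoc (f a), hz]
    simp
  refine ⟨ρ.comp (Φ.comp f.toAddMonoidHom), fun s y => ?_, fun x => ?_⟩
  · simp [hΦlin, hlin]
  · have hsplit : f (a * x ^ q) = (f a + z) * f x ^ q - z * f x ^ q := by
      rw [map_mul, map_pow]
      ring
    simp [hsplit, hΦ, hretr, hkill]

theorem stmt2_general {A B : Type*} [CommRing A] [CommRing B] (p : ℕ) [Fact p.Prime]
    [CharP A p] [CharP B p] [IsNoetherianRing B]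
    (f : A →+* B)
    (ρ : B →+ A) (hlin : ∀ (a : A) (b : B), ρ (f a * b) = a * ρ b)
    (hretr : ∀ a : A, ρ (f a) = a)
    (hB : StronglyFRegular B p) : StronglyFRegular A p := by
  intro a ha
  have : IsReduced B := hB.isReduced
  have : IsReduced A := isReduced_of_injective f (Function.LeftInverse.injective hretr)
  obtain ⟨z, hz, hcz⟩ := IsReduced.exists_mul_eq_zero_and_add_notMem_minimalPrimes
    (minimalPrimes.finite_of_isNoetherianRing B) (f a)
  obtain ⟨r, hr, Φ, hΦlin, hΦ⟩ := hB _ hcz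
  exact ⟨r, hr, exists_frobenius_splitting_of_retract f ρ hlin hretr
    (pow_ne_zero r (Fact.out : p.Prime).ne_zero)
    (IsReduced.mem_nonZeroDivisors_of_forall_notMem_minimalPrimes ha) hz hΦlin hΦ⟩

/-- Let `A ⊆ B` be Noetherian F-finite commutative rings of prime
characteristic `p` such that `A` is a direct summand of `B` as an `A`-module
(a pure subring).  If `B` is strongly F-regular then so is `A`. -/
theorem stmt2 {A B : Type*} [CommRing A] [CommRing B] (p : ℕ) [Fact p.Prime]
    [CharP A p] [CharP B p] [IsNoetherianRing A] [IsNoetherianRing B]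
    (hFA : FFinite A p) (hFB : FFinite B p)
    (f : A →+* B) (hf : Function.Injective f)
    (ρ : B →+ A) (hlin : ∀ (a : A) (b : B), ρ (f a * b) = a * ρ b)
    (hretr : ∀ a : A, ρ (f a) = a)
    (hB : StronglyFRegular B p) : StronglyFRegular A p :=
  stmt2_general p f ρ hlin hretr hB
end

section
/- Let R be a commutative ring of prime characteristic p, b ∈ R, and r ≥ 1. Suppose there is an R-module W, a nonzero element x of W that generates a free direct summand of W, and an R^(r)-linear map Ψ : W ⊗ R → W ⊗ R^(r) splitting the map id_W ⊗ bF^r : W ⊗ R^(r) → W ⊗ R (w ⊗ s^(r) ↦ w ⊗ b s^(p^r)). Then the map bF^r : R^(r) → R, s^(r) ↦ b s^(p^r), itself splits as an R^(r)-linear map. -/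
open scoped TensorProduct

/-
Contract with the functional `π` dual to `x`: put `Φ y := μ (Ψ (x ⊗ y))`, where
`μ (w ⊗ t) = π w * t`. Since `μ` commutes with multiplication on the second factor and
`μ (x ⊗ s) = s`, `Φ` inherits Frobenius-linearity and the splitting property from `Ψ`.
-/

/-- Multiplication by `s` on the second factor of `W ⊗ R` (tensor over the prime ring). -/
noncomputable def smulSnd {R W : Type*} [CommRing R] [AddCommGroup W] (s : R) :
    (W ⊗[ℤ] R) →ₗ[ℤ] (W ⊗[ℤ] R) :=
  LinearMap.lTensor W (LinearMap.mulLeft ℤ s)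

section Contraction

variable {R W : Type*} [CommRing R] [AddCommGroup W]

theorem smulSnd_tmul (s : R) (w : W) (t : R) :
    smulSnd s (w ⊗ₜ[ℤ] t) = w ⊗ₜ[ℤ] (s * t) :=
  rfl

noncomputable def contractFst (φ : W →ₗ[ℤ] R) : (W ⊗[ℤ] R) →ₗ[ℤ] R :=
  LinearMap.mul' ℤ R ∘ₗ TensorProduct.map φ LinearMap.id

theorem contractFst_tmul (φ : W →ₗ[ℤ] R) (w : W) (t : R) :
    contractFst φ (w ⊗ₜ[ℤ] t) = φ w * t :=
  rfl

theorem contractFst_smulSnd (φ : W →ₗ[ℤ] R) (s : R) (z : W ⊗[ℤ] R) :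
    contractFst φ (smulSnd s z) = s * contractFst φ z := by
  induction z using TensorProduct.induction_on with
  | zero => simp
  | tmul w t => rw [smulSnd_tmul, contractFst_tmul, contractFst_tmul, mul_left_comm]
  | add a b ha hb => rw [map_add, map_add, ha, hb, map_add, mul_add]

end Contraction

theorem stmt7_general {R : Type*} [CommRing R] (p : ℕ)
    (b : R) (r : ℕ)
    (W : Type*) [AddCommGroup W] [Module R W]
    (x : W) (π : W →ₗ[R] R) (hπ : π x = 1)
    (Ψ : (W ⊗[ℤ] R) →+ (W ⊗[ℤ] R))
    (hΨlin : ∀ (s : R) (z : W ⊗[ℤ] R), Ψ (smulSnd (s ^ p ^ r) z) = smulSnd s (Ψ z))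
    (hΨsplit : ∀ (w : W) (s : R), Ψ (w ⊗ₜ[ℤ] (b * s ^ p ^ r)) = w ⊗ₜ[ℤ] s) :
    ∃ Φ : R →+ R, (∀ s y : R, Φ (s ^ p ^ r * y) = s * Φ y) ∧
      ∀ s : R, Φ (b * s ^ p ^ r) = s := by
  let μ := contractFst (π.restrictScalars ℤ)
  refine ⟨μ.toAddMonoidHom.comp (Ψ.comp (TensorProduct.mk ℤ W R x).toAddMonoidHom), ?_, ?_⟩
  · intro s y
    change μ (Ψ (x ⊗ₜ[ℤ] (s ^ p ^ r * y))) = s * μ (Ψ (x ⊗ₜ[ℤ] y))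
    rw [← smulSnd_tmul, hΨlin, contractFst_smulSnd]
  · intro s
    change μ (Ψ (x ⊗ₜ[ℤ] (b * s ^ p ^ r))) = s
    rw [hΨsplit, contractFst_tmul, LinearMap.restrictScalars_apply, hπ, one_mul]

/-- Let `R` be a commutative ring of prime characteristic `p`, `b ∈ R`,
`r ≥ 1`.  Suppose there is an `R`-module `W`, a nonzero `x ∈ W` generating a free direct
summand (witnessed by a functional `π` with `π x = 1`), and an `R^(r)`-linear map
`Ψ : W ⊗ R → W ⊗ R^(r)` splitting `id_W ⊗ bF^r : W ⊗ R^(r) → W ⊗ R`,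
`w ⊗ s ↦ w ⊗ b s^(p^r)`.  (Here tensor products are over the prime ring; `R^(r)`-linearity
of `Ψ` means `Ψ ((s^(p^r)) · z) = s · Ψ z`, where `s` acts by multiplication on the second
factor, and the splitting property reads `Ψ (w ⊗ b s^(p^r)) = w ⊗ s`.)  Then
`bF^r : R^(r) → R`, `s ↦ b s^(p^r)`, itself splits `R^(r)`-linearly. -/
theorem stmt7 {R : Type*} [CommRing R] (p : ℕ) [Fact p.Prime] [CharP R p]
    (b : R) (r : ℕ) (hr : 1 ≤ r)
    (W : Type*) [AddCommGroup W] [Module R W]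
    (x : W) (hx : x ≠ 0) (π : W →ₗ[R] R) (hπ : π x = 1)
    (Ψ : (W ⊗[ℤ] R) →+ (W ⊗[ℤ] R))
    (hΨlin : ∀ (s : R) (z : W ⊗[ℤ] R), Ψ (smulSnd (s ^ p ^ r) z) = smulSnd s (Ψ z))
    (hΨsplit : ∀ (w : W) (s : R), Ψ (w ⊗ₜ[ℤ] (b * s ^ p ^ r)) = w ⊗ₜ[ℤ] s) :
    ∃ Φ : R →+ R, (∀ s y : R, Φ (s ^ p ^ r * y) = s * Φ y) ∧
      ∀ s : R, Φ (b * s ^ p ^ r) = s :=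
  stmt7_general p b r W x π hπ Ψ hΨlin hΨsplit
end

section
/- Let V be a finite-dimensional representation of a group (or module category with exact tensor products) of dimension n, over a field. For each i ≥ 1 there is an exact Koszul complex 0 → ⋀^i V → Sym₁ V ⊗ ⋀^{i−1} V → Sym₂ V ⊗ ⋀^{i−2} V → ⋯ → Sym_{i−1} V ⊗ ⋀^1 V → Sym_i V → 0. Using the good-dimension function GD (GD(M) = sup{ j : Ext^j(Δ(λ), M) ≠ 0 for some dominant λ }), and assuming GD(A ⊗ B) ≤ GD(A) + GD(B) and that tensor products of good modules are good, the following are equivalent: (1) Sym V is good; (2) ⊕_{i=1}^{n−1} Sym_i V is good; (3) GD(⋀^i V) ≤ i − 1 for i = 1, …, n − 1; (4) GD(⋀^i V) ≤ i − 1 for all i ≥ 1. -/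
/-!
Dimension shifting: in a short exact sequence `0 → X₁ → X₂ → X₃ → 0` with `GD(X₂) ≤ s - 1`,
the long exact Ext sequence gives `GD(X₁) ≤ s ↔ GD(X₃) ≤ s - 1`. Splicing the Koszul complex
`0 → ⋀^i V → ⋯ → Sym_j V ⊗ ⋀^{i-j} V → ⋯ → Sym_i V → 0` into short exact sequences therefore
shows `Sym_i V` good iff `GD(⋀^i V) ≤ i - 1`, as soon as each middle term has
`GD ≤ i - 1 - j`. By `GD(A ⊗ B) ≤ GD(A) + GD(B)` this holds once `Sym_j V` is good and
`GD(⋀^{i-j} V) ≤ i - j - 1` for `j < i`, so induction on `i` makes (2) and (3) equivalent.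
Conditions (3) and (4) differ only at `i ≥ n`, where `⋀^n V` is good and `⋀^i V = 0` beyond.
-/

open CategoryTheory CategoryTheory.Abelian CategoryTheory.Limits

universe w v u

/-- `GD(M) ≤ s`: all Ext-groups `Ext^i(Δ t, M)` with `i > s` vanish, for the fixed
family of test objects `Δ` (e.g. the Weyl modules `Δ(λ)`, `λ` dominant); `M` is good
iff `GD(M) ≤ 0`. -/
def GDle {C : Type u} [Category.{v} C] [Abelian C] [HasExt.{w} C]
    {ι : Type*} (Δ : ι → C) (M : C) (s : ℤ) : Prop :=
  ∀ (i : ℕ), s < (i : ℤ) → ∀ t : ι, Subsingleton (Ext (Δ t) M i)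

namespace GDle

variable {C : Type u} [Category.{v} C] [Abelian C] [HasExt.{w} C] {ι : Type*} {Δ : ι → C}

lemma mono {M : C} {s s' : ℤ} (h : GDle Δ M s) (hss : s ≤ s') : GDle Δ M s' :=
  fun i hi t => h i (hss.trans_lt hi) t

lemma of_iso {M M' : C} {s : ℤ} (h : GDle Δ M s) (e : M ≅ M') : GDle Δ M' s := by
  intro i hi t
  have := h i hi t
  refine subsingleton_of_forall_eq 0 fun x => ?_
  have hx : x = (x.comp (Ext.mk₀ e.inv) (add_zero i)).comp (Ext.mk₀ e.hom) (add_zero i) := by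
    rw [Ext.comp_assoc_of_third_deg_zero, Ext.mk₀_comp_mk₀, e.inv_hom_id, Ext.comp_mk₀_id]
  rw [hx, Subsingleton.elim (x.comp (Ext.mk₀ e.inv) (add_zero i)) 0, Ext.zero_comp]

lemma iff_of_iso {M M' : C} {s : ℤ} (e : M ≅ M') : GDle Δ M s ↔ GDle Δ M' s :=
  ⟨fun h => h.of_iso e, fun h => h.of_iso e.symm⟩

lemma of_isZero {M : C} (h : IsZero M) (s : ℤ) : GDle Δ M s := by
  intro i _ t
  refine subsingleton_of_forall_eq 0 fun x => ?_
  rw [← Ext.comp_mk₀_id x, h.eq_of_src (𝟙 M) 0, Ext.mk₀_zero, Ext.comp_zero]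

lemma iff_of_shortExact {S : ShortComplex C} (hS : S.ShortExact) {s : ℤ}
    (h₂ : GDle Δ S.X₂ (s - 1)) : GDle Δ S.X₁ s ↔ GDle Δ S.X₃ (s - 1) := by
  constructor
  · intro h₁ i hi t
    have := h₁ (i + 1) (by push_cast; omega) t
    have := h₂ i hi t
    refine subsingleton_of_forall_eq 0 fun x => ?_
    obtain ⟨y, rfl⟩ := Ext.covariant_sequence_exact₃ (Δ t) hS x rfl (Subsingleton.elim _ _)
    rw [Subsingleton.elim y 0, Ext.zero_comp]
  · intro h₃ i hi t
    have := h₂.mono (by omega : s - 1 ≤ s) i hi t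
    refine subsingleton_of_forall_eq 0 fun x => ?_
    obtain _ | k := i
    · have := hS.mono_f
      exact Ext.postcomp_mk₀_injective_of_mono (Δ t) S.f (Subsingleton.elim _ _)
    · have := h₃ k (by push_cast at hi; omega) t
      obtain ⟨y, rfl⟩ := Ext.covariant_sequence_exact₁ (Δ t) hS x (Subsingleton.elim _ _) rfl
      rw [Subsingleton.elim y 0, Ext.zero_comp]

open ComposableArrows in
lemma iff_of_exact {m : ℕ} {K : ComposableArrows C (m + 3)} (hK : K.Exact)
    (hleft : IsZero K.left) (hright : IsZero K.right) {a : ℤ}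
    (hmid : ∀ (j : ℕ) (_ : j < m), GDle Δ (K.obj' (j + 2)) (a - (j + 1))) :
    GDle Δ (K.obj' 1) a ↔ GDle Δ (K.obj' (m + 2)) (a - m) := by
  induction m generalizing a with
  | zero =>
    let f := K.map' 1 2
    have : Mono f := (hK.exact 0).mono_g (hleft.eq_of_src _ _)
    have : Epi f := (hK.exact 1).epi_f (hright.eq_of_tgt _ _)
    have : IsIso f := isIso_of_mono_of_epi _
    simpa using iff_of_iso (asIso f)
  | succ m ih =>
    let f := K.map' 1 2
    have : Mono f := (hK.exact 0).mono_g (hleft.eq_of_src _ _)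
    have hS : (ShortComplex.mk f (cokernel.π f) (cokernel.condition f)).ShortExact :=
      .mk' (ShortComplex.exact_of_g_is_cokernel _ (cokernelIsCokernel f)) inferInstance
        inferInstance
    let d := cokernel.desc f (K.map' 2 3) (hK.toIsComplex.zero 1)
    have hd : Mono d := (ShortComplex.exact_iff_mono_cokernel_desc _).1 (hK.exact 1)
    have hdg : d ≫ K.map' 3 4 = 0 := by
      rw [← cancel_epi (cokernel.π f), cokernel.π_desc_assoc, comp_zero]
      exact hK.toIsComplex.zero 2
    have hd_exact : (ShortComplex.mk d (K.map' 3 4) hdg).Exact := by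
      let φ : K.sc hK.toIsComplex 2 ⟶ ShortComplex.mk d (K.map' 3 4) hdg :=
        { τ₁ := cokernel.π f, τ₂ := 𝟙 _, τ₃ := 𝟙 _
          comm₁₂ := (cokernel.π_desc _ _ _).trans (Category.comp_id _).symm }
      have : Epi φ.τ₁ := by dsimp [φ]; exact coequalizer.π_epi
      exact (ShortComplex.exact_iff_of_epi_of_isIso_of_mono φ).1 (hK.exact 2)
    -- `0 → coker f → K₃ → ⋯ → 0`, left after splicing off `0 → K₁ → K₂ → coker f → 0`
    let K' : ComposableArrows C (m + 3) :=
      ((K.δ₀.δ₀.δ₀).precomp d).precomp (0 : K.left ⟶ cokernel f)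
    have hK' : K'.Exact := by
      have h0d : (ShortComplex.mk (0 : K.left ⟶ cokernel f) d zero_comp).Exact :=
        (ShortComplex.exact_iff_mono _ rfl).2 hd
      exact exact_of_δ₀ h0d.exact_toComposableArrows
        (exact_of_δ₀ hd_exact.exact_toComposableArrows hK.δ₀.δ₀.δ₀)
    have hQ := ih hK' hleft hright (a := a - 1)
      (fun j hj => (hmid (j + 1) (by omega)).mono (by push_cast; omega))
    rw [show a - ((m + 1 : ℕ) : ℤ) = a - 1 - m by push_cast; ring]
    exact (iff_of_shortExact hS ((hmid 0 (by omega)).mono (by simp))).trans hQ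

end GDle

open MonoidalCategory

section Koszul

variable {C : Type u} [Category.{v} C] [Abelian C] [MonoidalCategory C]

def HasKoszulComplex (S E : ℕ → C) (i : ℕ) : Prop :=
  ∃ K : ComposableArrows C (i + 2), K.Exact ∧ IsZero K.left ∧ IsZero K.right ∧
    Nonempty (K.obj 1 ≅ E i) ∧ Nonempty (K.obj ⟨i + 1, by omega⟩ ≅ S i) ∧
    ∀ j (_ : 1 ≤ j) (_ : j ≤ i - 1), Nonempty (K.obj ⟨1 + j, by omega⟩ ≅ S j ⊗ E (i - j))

variable [HasExt.{w} C] {ι : Type*} {Δ : ι → C} {S E : ℕ → C}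

lemma HasKoszulComplex.gdle_iff {i : ℕ} (hK : HasKoszulComplex S E i) (hi : 1 ≤ i)
    (hmid : ∀ j, 1 ≤ j → j < i → GDle Δ (S j ⊗ E (i - j)) ((i : ℤ) - 1 - j)) :
    GDle Δ (S i) 0 ↔ GDle Δ (E i) ((i : ℤ) - 1) := by
  obtain ⟨m, rfl⟩ : ∃ m, i = m + 1 := ⟨i - 1, by omega⟩
  obtain ⟨K, hK, hleft, hright, ⟨eE⟩, ⟨eS⟩, eT⟩ := hK
  have key := GDle.iff_of_exact hK hleft hright (a := m) fun j hj => by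
    obtain ⟨e⟩ := eT (j + 1) (by omega) (by omega)
    have hidx : K.obj' (j + 2) = K.obj' (1 + (j + 1)) := by congr 1; omega
    exact ((hmid (j + 1) (by omega) (by omega)).of_iso (e.symm ≪≫ eqToIso hidx.symm)).mono
      (by push_cast; omega)
  rw [sub_self] at key
  rw [← GDle.iff_of_iso eS, ← GDle.iff_of_iso eE, Nat.cast_succ, add_sub_cancel_right]
  exact key.symm

lemma forall_one_le_le_succ_iff {P : ℕ → Prop} {N : ℕ} :
    (∀ i, 1 ≤ i → i ≤ N + 1 → P i) ↔ (∀ i, 1 ≤ i → i ≤ N → P i) ∧ P (N + 1) :=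
  ⟨fun h => ⟨fun i h₁ h₂ => h i h₁ (by omega), h _ (by omega) le_rfl⟩,
    fun ⟨h, h'⟩ i h₁ h₂ => (Nat.le_succ_iff.1 h₂).elim (h i h₁) fun e => e ▸ h'⟩

lemma gdle_sym_iff_gdle_exterior
    (htensor : ∀ (A B : C) (a b : ℤ), GDle Δ A a → GDle Δ B b → GDle Δ (A ⊗ B) (a + b))
    (hKoszul : ∀ i, 1 ≤ i → HasKoszulComplex S E i) (N : ℕ) :
    (∀ i, 1 ≤ i → i ≤ N → GDle Δ (S i) 0) ↔
      (∀ i, 1 ≤ i → i ≤ N → GDle Δ (E i) ((i : ℤ) - 1)) := by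
  induction N with
  | zero => exact ⟨fun _ i h₁ h₂ => by omega, fun _ i h₁ h₂ => by omega⟩
  | succ N ih =>
    rw [forall_one_le_le_succ_iff, forall_one_le_le_succ_iff, ← ih]
    refine and_congr_right fun hS => (hKoszul _ N.succ_pos).gdle_iff N.succ_pos fun j h₁ h₂ => ?_
    exact (htensor _ _ 0 _ (hS j h₁ (by omega)) (ih.1 hS (N + 1 - j) (by omega) (by omega))).mono
      (by omega)

end Koszul

/-- Let `V` be an `n`-dimensional representation, with symmetric powers
`S i = Sym_i V` and exterior powers `E i = ⋀^i V` (so `E i = 0` for `i > n` and `E n` is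
one-dimensional, hence good), linked for each `i ≥ 1` by the exact Koszul complex
`0 → ⋀^i V → Sym₁ V ⊗ ⋀^{i-1} V → ⋯ → Sym_{i-1} V ⊗ ⋀^1 V → Sym_i V → 0`.
Assuming `GD(A ⊗ B) ≤ GD(A) + GD(B)` (in particular tensor products of good objects are
good), the following are equivalent:
(1) `Sym V` is good; (2) `⊕_{i=1}^{n-1} Sym_i V` is good;
(3) `GD(⋀^i V) ≤ i - 1` for `1 ≤ i ≤ n - 1`; (4) `GD(⋀^i V) ≤ i - 1` for all `i ≥ 1`. -/
theorem stmt9 {C : Type u} [Category.{v} C] [Abelian C] [MonoidalCategory C] [HasExt.{w} C]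
    {ι : Type*} (Δ : ι → C) (n : ℕ) (S E : ℕ → C)
    (hS0 : GDle Δ (S 0) 0)
    (hEn : GDle Δ (E n) 0)
    (hEzero : ∀ i : ℕ, n < i → IsZero (E i))
    (htensor : ∀ (A B : C) (a b : ℤ), GDle Δ A a → GDle Δ B b →
      GDle Δ (MonoidalCategory.tensorObj A B) (a + b))
    (hKoszul : ∀ i : ℕ, 1 ≤ i → ∃ K : ComposableArrows C (i + 2), K.Exact ∧
      IsZero (K.obj' 0) ∧ IsZero (K.obj' (i + 2)) ∧
      Nonempty (K.obj' 1 ≅ E i) ∧ Nonempty (K.obj' (i + 1) ≅ S i) ∧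
      ∀ (j : ℕ) (h1 : 1 ≤ j) (h2 : j ≤ i - 1),
        Nonempty (K.obj' (1 + j) (by omega) ≅ MonoidalCategory.tensorObj (S j) (E (i - j)))) :
    ((∀ i : ℕ, GDle Δ (S i) 0) ↔ (∀ i : ℕ, 1 ≤ i → i ≤ n - 1 → GDle Δ (S i) 0)) ∧
    ((∀ i : ℕ, 1 ≤ i → i ≤ n - 1 → GDle Δ (S i) 0) ↔
      (∀ i : ℕ, 1 ≤ i → i ≤ n - 1 → GDle Δ (E i) ((i : ℤ) - 1))) ∧
    ((∀ i : ℕ, 1 ≤ i → i ≤ n - 1 → GDle Δ (E i) ((i : ℤ) - 1)) ↔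
      (∀ i : ℕ, 1 ≤ i → GDle Δ (E i) ((i : ℤ) - 1))) := by
  have h23 := gdle_sym_iff_gdle_exterior htensor hKoszul (n - 1)
  have h34 : (∀ i, 1 ≤ i → i ≤ n - 1 → GDle Δ (E i) ((i : ℤ) - 1)) →
      ∀ i, 1 ≤ i → GDle Δ (E i) ((i : ℤ) - 1) := fun hE i h₁ => by
    rcases lt_trichotomy i n with hi | rfl | hi
    · exact hE i h₁ (by omega)
    · exact hEn.mono (by omega)
    · exact GDle.of_isZero (hEzero i hi) _
  have h41 (hE : ∀ i, 1 ≤ i → GDle Δ (E i) ((i : ℤ) - 1)) (i : ℕ) : GDle Δ (S i) 0 := by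
    rcases Nat.eq_zero_or_pos i with rfl | hi
    · exact hS0
    · exact (gdle_sym_iff_gdle_exterior htensor hKoszul i).2 (fun k h₁ _ => hE k h₁) i hi le_rfl
  exact ⟨⟨fun h i _ _ => h i, fun h => h41 (h34 (h23.1 h))⟩, h23,
    ⟨h34, fun h i h₁ _ => h i h₁⟩⟩
end

section
/- Let Ω be a finite poset and fix for each ω ∈ Ω the weight 3^(coht ω), where coht(ω) is the maximum length of a chain ω = ω₀ < ω₁ < ⋯ in Ω. For a monomial m = ∏_ω ω^{c(ω)} define w(m) = Σ_ω c(ω)·3^(coht ω). Then: (a) w(m m′) = w(m) + w(m′); and (b) if ξ, η ∈ Ω are incomparable and m is a monomial divisible by some ξ' with ξ' < ξ and ξ' < η, of the same total degree as ξη, then w(m) > w(ξη). Consequently any rewriting process that repeatedly replaces a product ξη of incomparable elements by monomials of the same degree each divisible by an element strictly smaller than both ξ and η terminates in finitely many steps. -/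
section defs

variable {Ω : Type*} [Fintype Ω] [DecidableEq Ω] [PartialOrder Ω]

/-- The weight of a monomial `m = ∏ ω ^ (m ω)` on a finite poset `Ω`:
`w(m) = ∑ ω, m ω · 3 ^ (coht ω)`, where `coht ω` is the maximal length of a chain
going up from `ω`. -/
noncomputable def monWeight (m : Ω → ℕ) : ℕ :=
  ∑ ω : Ω, m ω * 3 ^ (Order.coheight ω).toNat

/-- The total degree of a monomial. -/
def monDeg (m : Ω → ℕ) : ℕ := ∑ ω : Ω, m ω

/-- The monomial `ξ·η`. -/
def monPair (ξ η : Ω) : Ω → ℕ :=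
  fun ω => (if ω = ξ then 1 else 0) + (if ω = η then 1 else 0)

end defs

/-!
The weight of an element grows by a factor of at least three for every step down the poset: if
`ξ' < ξ` and `ξ' < η` then `coht ξ'` exceeds both `coht ξ` and `coht η`, so
`3 ^ coht ξ + 3 ^ coht η ≤ 2 · 3 ^ (coht ξ' - 1) < 3 ^ coht ξ'`, and a single factor `ξ'` of `m`
already outweighs `ξη`. Termination holds because a monomial of degree `d` has weight at most
`d · 3 ^ |Ω|`, so the weights along a rewriting sequence are bounded.
-/

lemma Nat.pow_add_pow_lt_pow {k a b c : ℕ} (hk : 3 ≤ k) (ha : a < c) (hb : b < c) :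
    k ^ a + k ^ b < k ^ c := by
  obtain ⟨n, rfl⟩ : ∃ n, c = n + 1 := Nat.exists_eq_add_one_of_ne_zero (by omega)
  have hpos : 0 < k ^ n := Nat.pow_pos (by omega)
  calc k ^ a + k ^ b ≤ k ^ n + k ^ n := by
        gcongr <;> omega
    _ < k * k ^ n := by nlinarith
    _ = k ^ (n + 1) := by ring

namespace Order

variable {α : Type*} [Preorder α] [Fintype α]

lemma coheight_le_card (x : α) : coheight x ≤ Fintype.card α :=
  coheight_le fun p _ => by exact_mod_cast p.length_lt_card.le

lemma coheight_ne_top_of_fintype (x : α) : coheight x ≠ ⊤ :=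
  ne_top_of_le_ne_top (ENat.natCast_ne_top _) (coheight_le_card x)

lemma coheight_toNat_le_card (x : α) : (coheight x).toNat ≤ Fintype.card α :=
  ENat.toNat_le_of_le_natCast (coheight_le_card x)

lemma coheight_toNat_lt_of_lt {x y : α} (h : x < y) :
    (coheight y).toNat < (coheight x).toNat := by
  have hlt := coheight_strictAnti h (coheight_ne_top_of_fintype y).lt_top
  rwa [← ENat.natCast_toNat (coheight_ne_top_of_fintype x),
    ← ENat.natCast_toNat (coheight_ne_top_of_fintype y), Nat.cast_lt] at hlt

end Order

section Weight

variable {Ω : Type*} [Fintype Ω] [PartialOrder Ω]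

lemma monWeight_add (m m' : Ω → ℕ) :
    monWeight (fun ω => m ω + m' ω) = monWeight m + monWeight m' := by
  simp only [monWeight, add_mul, Finset.sum_add_distrib]

lemma mul_pow_coheight_le_monWeight (m : Ω → ℕ) (ω : Ω) :
    m ω * 3 ^ (Order.coheight ω).toNat ≤ monWeight m :=
  Finset.single_le_sum (f := fun ω => m ω * 3 ^ (Order.coheight ω).toNat)
    (fun _ _ => Nat.zero_le _) (Finset.mem_univ ω)

lemma monWeight_le_monDeg_mul (m : Ω → ℕ) :
    monWeight m ≤ monDeg m * 3 ^ Fintype.card Ω := by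
  rw [monDeg, Finset.sum_mul]
  exact Finset.sum_le_sum fun ω _ =>
    Nat.mul_le_mul_left _ (Nat.pow_le_pow_right (by norm_num) (Order.coheight_toNat_le_card ω))

lemma monWeight_monPair [DecidableEq Ω] (ξ η : Ω) :
    monWeight (monPair ξ η) = 3 ^ (Order.coheight ξ).toNat + 3 ^ (Order.coheight η).toNat := by
  simp only [monWeight, monPair, add_mul, Finset.sum_add_distrib, ite_mul, one_mul, zero_mul,
    Finset.sum_ite_eq', Finset.mem_univ, if_true]

lemma monWeight_monPair_lt [DecidableEq Ω] {ξ η ξ' : Ω} (hξ : ξ' < ξ)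
    (hη : ξ' < η) {m : Ω → ℕ} (hm : 1 ≤ m ξ') : monWeight (monPair ξ η) < monWeight m :=
  calc monWeight (monPair ξ η)
      < 3 ^ (Order.coheight ξ').toNat := by
        rw [monWeight_monPair]
        exact Nat.pow_add_pow_lt_pow le_rfl (Order.coheight_toNat_lt_of_lt hξ)
          (Order.coheight_toNat_lt_of_lt hη)
    _ ≤ m ξ' * 3 ^ (Order.coheight ξ').toNat := Nat.le_mul_of_pos_left _ hm
    _ ≤ monWeight m := mul_pow_coheight_le_monWeight m ξ'

lemma not_strictMono_monWeight_of_monDeg_eq (d : ℕ) (f : ℕ → Ω → ℕ)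
    (hdeg : ∀ k, monDeg (f k) = d) : ¬ StrictMono fun k => monWeight (f k) := fun hf =>
  hf.not_bddAbove_range_of_wellFoundedLT ⟨d * 3 ^ Fintype.card Ω, by
    rintro _ ⟨k, rfl⟩
    simpa only [hdeg] using monWeight_le_monDeg_mul (f k)⟩

end Weight

/-- On a finite poset `Ω`, with `w` the weight above:
(a) `w(m m') = w(m) + w(m')`;
(b) if `ξ, η` are incomparable and `m` is a monomial of the same total degree as `ξη`
divisible by some `ξ'` with `ξ' < ξ` and `ξ' < η`, then `w(m) > w(ξη)`;
(c) consequently, any rewriting process replacing products of incomparable elements by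
degree-preserving combinations of monomials divisible by strictly smaller elements
terminates: there is no infinite sequence of monomials of a fixed degree with strictly
increasing weight. -/
theorem stmt10 {Ω : Type*} [Fintype Ω] [DecidableEq Ω] [PartialOrder Ω] :
    (∀ m m' : Ω → ℕ, monWeight (fun ω => m ω + m' ω) = monWeight m + monWeight m') ∧
    (∀ ξ η : Ω, ¬ ξ ≤ η → ¬ η ≤ ξ → ∀ m : Ω → ℕ, monDeg m = monDeg (monPair ξ η) →
      ∀ ξ' : Ω, ξ' < ξ → ξ' < η → 1 ≤ m ξ' → monWeight (monPair ξ η) < monWeight m) ∧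
    (∀ d : ℕ, ¬ ∃ f : ℕ → Ω → ℕ, (∀ k, monDeg (f k) = d) ∧
      ∀ k, monWeight (f k) < monWeight (f (k + 1))) := by
  refine ⟨monWeight_add, ?_, ?_⟩
  · intro ξ η _ _ m _ ξ' hξ hη hm
    exact monWeight_monPair_lt hξ hη hm
  · rintro d ⟨f, hdeg, hlt⟩
    exact not_strictMono_monWeight_of_monDeg_eq d f hdeg (strictMono_nat_of_lt_succ hlt)
end
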